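/- Let C be a category with a zero object and all finite limits, and suppose given a commutative square consisting of objects A, B, C, D and morphisms α' : A → C, α : B → D, β' : A → B, β : C → D satisfying β' ≫ α = α' ≫ β. Then the fiber (kernel) of the induced morphism Fib(β') → Fib(β) (the morphism between kernels induced by α' and α) is isomorphic to the fiber of the canonical morphism A → B ×_D C, where B ×_D C is the pullback of α : B → D and β : C → D and the morphism A → B ×_D C is the one induced by β' and α'. -/

import Mathlib

open CategoryTheory CategoryTheory.Limits

namespace CategoryTheory.Limits

variable {C : Type*} [Category C] [HasZeroMorphisms C]
  {A B X D T : C} {α' : A ⟶ X} {α : B ⟶ D} {β' : A ⟶ B} {β : X ⟶ D}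
  (w : β' ≫ α = α' ≫ β)

include w in
lemma comp_pullback_lift_eq_zero_iff [HasPullback α β] (f : T ⟶ A) :
    f ≫ pullback.lift β' α' w = 0 ↔ f ≫ β' = 0 ∧ f ≫ α' = 0 := by
  simp only [pullback.hom_ext_iff, Category.assoc, pullback.lift_fst, pullback.lift_snd,
    zero_comp]

lemma comp_kernel_map_eq_zero_iff [HasKernel β'] [HasKernel β] (g : T ⟶ kernel β') :
    g ≫ kernel.map β' β α' α w = 0 ↔ g ≫ kernel.ι β' ≫ α' = 0 := by
  rw [← cancel_mono (kernel.ι β)]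
  simp

/-- Both fibers are the common kernel of `β'` and `α'`. -/
noncomputable def isKernelPullbackLiftOfKernelMap [HasKernel β'] [HasKernel β] [HasPullback α β]
    [HasKernel (kernel.map β' β α' α w)] :
    IsLimit (KernelFork.ofι (kernel.ι (kernel.map β' β α' α w) ≫ kernel.ι β')
      ((comp_pullback_lift_eq_zero_iff w _).2
        ⟨by simp, by simpa using (comp_kernel_map_eq_zero_iff w _).1 (kernel.condition _)⟩)) :=
  KernelFork.IsLimit.ofι' _ _ fun k hk =>
    have hk' := (comp_pullback_lift_eq_zero_iff w k).1 hk
    ⟨kernel.lift _ (kernel.lift β' k hk'.1)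
      ((comp_kernel_map_eq_zero_iff w _).2 (by simpa using hk'.2)), by simp⟩

end CategoryTheory.Limits

theorem fib_of_kernel_map_vert_iso_fib_of_lift_to_pullback_general
    {C : Type*} [Category C] [HasZeroMorphisms C] [HasFiniteLimits C]
    {A B X D : C} (α' : A ⟶ X) (α : B ⟶ D) (β' : A ⟶ B) (β : X ⟶ D)
    (w : β' ≫ α = α' ≫ β) :
    Nonempty (kernel (kernel.map β' β α' α w) ≅ kernel (pullback.lift β' α' w)) :=
  ⟨(isKernelPullbackLiftOfKernelMap w).conePointUniqueUpToIso (limit.isLimit _)⟩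

/-- In a category with a zero object and all finite limits, given a
commutative square `β' ≫ α = α' ≫ β`, the fiber (kernel) of the induced morphism
`Fib(β') → Fib(β)` (induced by `α'` and `α`) is isomorphic to the fiber of the canonical
morphism `A → B ×_D C` induced by `β'` and `α'`. -/
theorem fib_of_kernel_map_vert_iso_fib_of_lift_to_pullback
    {C : Type*} [Category C] [HasZeroObject C] [HasZeroMorphisms C] [HasFiniteLimits C]
    {A B X D : C} (α' : A ⟶ X) (α : B ⟶ D) (β' : A ⟶ B) (β : X ⟶ D)
    (w : β' ≫ α = α' ≫ β) :
    Nonempty (kernel (kernel.map β' β α' α w) ≅ kernel (pullback.lift β' α' w)) :=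
  fib_of_kernel_map_vert_iso_fib_of_lift_to_pullback_general α' α β' β w
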